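/- arXiv:2310.03584 — 2 statements merged into one kernel-verified Lean document; each statement's English description precedes it below -/
import Mathlib

section
/- If D is a k-critical digraph, a = uv is an arc of D, and φ is an acyclic (k−1)-coloring of D − a, then there is a color c such that the subdigraph induced by the color class φ⁻¹(c) contains a directed path from v to u. -/
/-- A finite simple digraph with vertices drawn from `ℕ`:
no loops, no parallel arcs in the same direction (arcs form a relation),
but antiparallel arcs are allowed. -/
structure Digraph' where
  verts : Finset ℕ
  Adj : ℕ → ℕ → Prop
  adj_mem : ∀ ⦃u v⦄, Adj u v → u ∈ verts ∧ v ∈ verts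
  loopless : ∀ v, ¬ Adj v v

namespace Digraph'

/-- The order (number of vertices) of a digraph. -/
def order (D : Digraph') : ℕ := D.verts.card

/-- The number of arcs of a digraph. -/
noncomputable def numArcs (D : Digraph') : ℕ :=
  Nat.card {a : ℕ × ℕ // D.Adj a.1 a.2}

/-- The set `S` induces an acyclic subdigraph of `D` (no directed cycle inside `S`). -/
def AcyclicOn (D : Digraph') (S : Set ℕ) : Prop :=
  ∀ v, ¬ Relation.TransGen (fun a b => a ∈ S ∧ b ∈ S ∧ D.Adj a b) v v

/-- A digraph is acyclic if it contains no directed cycle. -/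
def IsAcyclic (D : Digraph') : Prop :=
  ∀ v, ¬ Relation.TransGen D.Adj v v

/-- `φ` is an acyclic `k`-coloring of `D`: it uses colors `< k` on the vertices and
every color class induces an acyclic subdigraph. -/
def IsAcyclicColoring (D : Digraph') (k : ℕ) (φ : ℕ → ℕ) : Prop :=
  (∀ v ∈ D.verts, φ v < k) ∧ ∀ c, D.AcyclicOn {v | v ∈ D.verts ∧ φ v = c}

/-- `D` admits an acyclic `k`-coloring. -/
def Colorable (D : Digraph') (k : ℕ) : Prop := ∃ φ, D.IsAcyclicColoring k φ

/-- The dichromatic number of `D`. -/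
noncomputable def dichrom (D : Digraph') : ℕ := sInf {k | D.Colorable k}

/-- `H` is a subdigraph of `D`. -/
def IsSubdigraph (H D : Digraph') : Prop :=
  H.verts ⊆ D.verts ∧ ∀ ⦃u v⦄, H.Adj u v → D.Adj u v

/-- `D` is critical: every proper subdigraph has a strictly smaller dichromatic number. -/
def Critical (D : Digraph') : Prop :=
  ∀ H, IsSubdigraph H D → H ≠ D → dichrom H < dichrom D

/-- `D` is `k`-critical. -/
def IsCritical (D : Digraph') (k : ℕ) : Prop := D.dichrom = k ∧ D.Critical

/-- The digraph obtained from `D` by deleting the vertex `x`. -/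
def delVert (D : Digraph') (x : ℕ) : Digraph' where
  verts := D.verts.erase x
  Adj u v := D.Adj u v ∧ u ≠ x ∧ v ≠ x
  adj_mem := by
    intro u v h
    rcases h with ⟨h, hu, hv⟩
    exact ⟨Finset.mem_erase.2 ⟨hu, (D.adj_mem h).1⟩, Finset.mem_erase.2 ⟨hv, (D.adj_mem h).2⟩⟩
  loopless := by intro v h; exact D.loopless v h.1

/-- The digraph obtained from `D` by deleting the arc `xy`. -/
def delArc (D : Digraph') (x y : ℕ) : Digraph' where
  verts := D.verts
  Adj u v := D.Adj u v ∧ ¬(u = x ∧ v = y)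
  adj_mem := by intro u v h; exact D.adj_mem h.1
  loopless := by intro v h; exact D.loopless v h.1

/-- The out-degree of `v` in `D`. -/
noncomputable def outDeg (D : Digraph') (v : ℕ) : ℕ := Nat.card {w // D.Adj v w}

/-- The in-degree of `v` in `D`. -/
noncomputable def inDeg (D : Digraph') (v : ℕ) : ℕ := Nat.card {w // D.Adj w v}

/-- `D` is the complete biorientation of a complete graph on its vertex set. -/
def IsBiorientedComplete (D : Digraph') : Prop :=
  ∀ u v, D.Adj u v ↔ (u ∈ D.verts ∧ v ∈ D.verts ∧ u ≠ v)

/-- `D` is a directed cycle (of length at least `2`; length `2` is a digon):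
every vertex has out-degree and in-degree one and `D` is strongly connected. -/
def IsDirectedCycle (D : Digraph') : Prop :=
  2 ≤ D.verts.card ∧
  (∀ v ∈ D.verts, D.outDeg v = 1 ∧ D.inDeg v = 1) ∧
  ∀ u ∈ D.verts, ∀ v ∈ D.verts, Relation.TransGen D.Adj u v

/-- `D` is the Dirac join of the disjoint digraphs `D₁` and `D₂`: the union of `D₁`
and `D₂` together with all arcs in both directions between them. -/
def IsDiracJoin (D D₁ D₂ : Digraph') : Prop :=
  Disjoint D₁.verts D₂.verts ∧
  D.verts = D₁.verts ∪ D₂.verts ∧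
  ∀ u v, D.Adj u v ↔ (D₁.Adj u v ∨ D₂.Adj u v ∨
    (u ∈ D₁.verts ∧ v ∈ D₂.verts) ∨ (u ∈ D₂.verts ∧ v ∈ D₁.verts))

/-- `v` is a dominating vertex of `D`: it is joined by arcs in both directions to
all other vertices of `D`. -/
def IsDominatingVertex (D : Digraph') (v : ℕ) : Prop :=
  v ∈ D.verts ∧ ∀ u ∈ D.verts, u ≠ v → D.Adj u v ∧ D.Adj v u

/-- The number of dominating vertices of `D`. -/
noncomputable def numDomVerts (D : Digraph') : ℕ :=
  {v | D.IsDominatingVertex v}.ncard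

/-- `C` is a dominating subdigraph of `D`. -/
def IsDominatingSubdigraph (D C : Digraph') : Prop :=
  ∃ D'' : Digraph', D''.verts.Nonempty ∧ IsDiracJoin D C D''

/-- The number of dominating directed cycles of order at least three of `D`. -/
noncomputable def numDomCycles (D : Digraph') : ℕ :=
  {C : Digraph' | IsSubdigraph C D ∧ C.IsDirectedCycle ∧ 3 ≤ C.order ∧
    D.IsDominatingSubdigraph C}.ncard

/-- The complement of `D` (on the same vertex set). -/
def compl (D : Digraph') : Digraph' where
  verts := D.verts
  Adj u v := u ∈ D.verts ∧ v ∈ D.verts ∧ u ≠ v ∧ ¬ D.Adj u v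
  adj_mem := by intro u v h; exact ⟨h.1, h.2.1⟩
  loopless := by intro v h; exact h.2.2.1 rfl

/-- `D` is connected (its underlying undirected graph is connected). -/
def Connected (D : Digraph') : Prop :=
  D.verts.Nonempty ∧ ∀ u ∈ D.verts, ∀ v ∈ D.verts,
    Relation.ReflTransGen (fun a b => D.Adj a b ∨ D.Adj b a) u v

/-- `φ` is a proper `k`-coloring of the symmetric digraph `D` viewed as a graph. -/
def IsProperColoring (D : Digraph') (k : ℕ) (φ : ℕ → ℕ) : Prop :=
  (∀ v ∈ D.verts, φ v < k) ∧ ∀ u v, D.Adj u v → φ u ≠ φ v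

/-- The chromatic number of (the underlying graph of) `D`. -/
noncomputable def chrom (D : Digraph') : ℕ := sInf {k | ∃ φ, D.IsProperColoring k φ}

/-- `D` belongs to the (complete biorientation of the) Gallai--Dirac class `DG(k)`. -/
def InDGClass (D : Digraph') (k : ℕ) : Prop :=
  ∃ (X Y₁ Y₂ : Finset ℕ) (v₁ v₂ : ℕ),
    X.Nonempty ∧ Y₁.Nonempty ∧ Y₂.Nonempty ∧
    Disjoint X Y₁ ∧ Disjoint X Y₂ ∧ Disjoint Y₁ Y₂ ∧
    v₁ ∉ X ∪ Y₁ ∪ Y₂ ∧ v₂ ∉ X ∪ Y₁ ∪ Y₂ ∧ v₁ ≠ v₂ ∧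
    Y₁.card + Y₂.card = k - 1 ∧ X.card + 1 = k - 1 ∧
    D.verts = X ∪ Y₁ ∪ Y₂ ∪ {v₁, v₂} ∧
    (∀ u v, D.Adj u v ↔ (u ≠ v ∧
      ((u ∈ X ∧ v ∈ X) ∨ (u ∈ Y₁ ∪ Y₂ ∧ v ∈ Y₁ ∪ Y₂) ∨
       (u = v₁ ∧ v ∈ X ∪ Y₁) ∨ (v = v₁ ∧ u ∈ X ∪ Y₁) ∨
       (u = v₂ ∧ v ∈ X ∪ Y₂) ∨ (v = v₂ ∧ u ∈ X ∪ Y₂))))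

end Digraph'

/-- The minimum number of arcs in a `k`-critical digraph of order `n`. -/
noncomputable def extArcs (k n : ℕ) : ℕ :=
  sInf {m | ∃ D : Digraph', D.IsCritical k ∧ D.order = n ∧ D.numArcs = m}

open Digraph'

/-!
Since `D - uv` is a proper subdigraph of the `k`-critical digraph `D`, `k ≥ 1` and `D` has no
acyclic `(k-1)`-coloring. So adding the arc `uv` back must close a cycle inside some color
class of `φ`; this cycle uses `uv`, and its remainder is a path from `v` to `u` in that class.
-/

namespace Digraph'

abbrev InducedAdj (D : Digraph') (S : Set ℕ) (a b : ℕ) : Prop := a ∈ S ∧ b ∈ S ∧ D.Adj a b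

theorem delArc_isSubdigraph (D : Digraph') (u v : ℕ) : IsSubdigraph (D.delArc u v) D :=
  ⟨subset_rfl, fun _ _ hadj => hadj.1⟩

theorem delArc_ne {D : Digraph'} {u v : ℕ} (ha : D.Adj u v) : D.delArc u v ≠ D := by
  intro he
  have hdel : (D.delArc u v).Adj u v := by rw [he]; exact ha
  exact hdel.2 ⟨rfl, rfl⟩

theorem transGen_inducedAdj_delArc_or {D : Digraph'} {u v : ℕ} {S : Set ℕ} {x y : ℕ}
    (h : Relation.TransGen (D.InducedAdj S) x y) :
    Relation.TransGen ((D.delArc u v).InducedAdj S) x y ∨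
      u ∈ S ∧ v ∈ S ∧ Relation.ReflTransGen ((D.delArc u v).InducedAdj S) x u ∧
        Relation.ReflTransGen ((D.delArc u v).InducedAdj S) v y := by
  induction h with
  | @single b hxb =>
    by_cases huv : x = u ∧ b = v
    · obtain ⟨rfl, rfl⟩ := huv
      exact Or.inr ⟨hxb.1, hxb.2.1, .refl, .refl⟩
    · exact Or.inl (.single ⟨hxb.1, hxb.2.1, hxb.2.2, huv⟩)
  | @tail b c _ hbc ih =>
    by_cases huv : b = u ∧ c = v
    · obtain ⟨rfl, rfl⟩ := huv
      refine Or.inr ⟨hbc.1, hbc.2.1, ?_, .refl⟩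
      rcases ih with hxb | ⟨-, -, hxb, -⟩
      · exact hxb.to_reflTransGen
      · exact hxb
    · have hbc' : (D.delArc u v).InducedAdj S b c := ⟨hbc.1, hbc.2.1, hbc.2.2, huv⟩
      rcases ih with hxb | ⟨hu, hv, hxu, hvb⟩
      · exact Or.inl (hxb.tail hbc')
      · exact Or.inr ⟨hu, hv, hxu, hvb.tail hbc'⟩

theorem exists_path_of_not_acyclicOn {D : Digraph'} {u v : ℕ} {S : Set ℕ}
    (hS : (D.delArc u v).AcyclicOn S) (hD : ¬ D.AcyclicOn S) :
    u ∈ S ∧ v ∈ S ∧ Relation.ReflTransGen ((D.delArc u v).InducedAdj S) v u := by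
  obtain ⟨w, hw⟩ : ∃ w, Relation.TransGen (D.InducedAdj S) w w := by
    simpa [AcyclicOn] using hD
  rcases transGen_inducedAdj_delArc_or hw with hcyc | ⟨hu, hv, hwu, hvw⟩
  · exact absurd hcyc (hS w)
  · exact ⟨hu, hv, hvw.trans hwu⟩

theorem IsCritical.not_colorable_of_adj {D : Digraph'} {k u v : ℕ} (h : D.IsCritical k)
    (ha : D.Adj u v) : ¬ D.Colorable (k - 1) := by
  intro hcol
  have hlt := h.2 _ (D.delArc_isSubdigraph u v) (delArc_ne ha)
  have hle : D.dichrom ≤ k - 1 := Nat.sInf_le hcol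
  have hk := h.1
  omega

end Digraph'

/-- If `D` is `k`-critical, `uv` is an arc of `D` and `φ` is an acyclic
`(k-1)`-coloring of `D - uv`, then some color class induces a subdigraph of `D - uv`
containing a directed path from `v` to `u`. -/
theorem stmt5 (D : Digraph') (k : ℕ) (h : D.IsCritical k) (u v : ℕ) (ha : D.Adj u v)
    (φ : ℕ → ℕ) (hφ : (D.delArc u v).IsAcyclicColoring (k - 1) φ) :
    ∃ c, v ∈ D.verts ∧ φ v = c ∧ u ∈ D.verts ∧ φ u = c ∧
      Relation.ReflTransGen
        (fun a b => a ∈ D.verts ∧ φ a = c ∧ b ∈ D.verts ∧ φ b = c ∧ (D.delArc u v).Adj a b)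
        v u := by
  by_contra hpath
  refine h.not_colorable_of_adj ha ⟨φ, hφ.1, fun c => ?_⟩
  by_contra hcyc
  obtain ⟨hu, hv, hvu⟩ := exists_path_of_not_acyclicOn (hφ.2 c) hcyc
  exact hpath ⟨c, hv.1, hv.2, hu.1, hu.2, Relation.ReflTransGen.mono
    (fun a b hab => ⟨hab.1.1, hab.1.2, hab.2.1.1, hab.2.1.2, hab.2.2⟩) v u hvu⟩
end

section
/- For all integers n ≥ k ≥ 3 and m ≥ k, ext⃗(k, n+m−1) ≤ ext⃗(k, n) + ext⃗(k, m) − 1, where ext⃗(k, n) denotes the minimum number of arcs in a k-critical digraph of order n. -/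
open Digraph'

/-!
The Hajós join of two `k`-critical digraphs is `k`-critical, with `|D₁| + |D₂| - 1` vertices
and `|A(D₁)| + |A(D₂)| - 1` arcs; joining two extremal digraphs, relabelled apart, gives the
bound.

The join is not `(k-1)`-colourable, because a colouring would restrict to colourings of
`D₁ - uv` and `D₂ - xy`, which force monochromatic paths `v ⇝ u` and `y ⇝ x` closed by `uy`.
Deleting any arc makes it `(k-1)`-colourable: glue colourings of the two sides, each with one
arc deleted, that agree at `v`. Since `v` is a cut vertex of the join minus `uy`, a
monochromatic cycle must pass through `uy` and be closed by `uv` or `xy`.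
-/

namespace Relation

variable {α : Type*} {r r₁ r₂ : α → α → Prop}

theorem transGen_avoid_or_through (u y : α) {a b : α} (h : TransGen r a b) :
    TransGen (fun p q => r p q ∧ ¬(p = u ∧ q = y)) a b ∨
      (ReflTransGen (fun p q => r p q ∧ ¬(p = u ∧ q = y)) a u ∧ r u y ∧
        ReflTransGen (fun p q => r p q ∧ ¬(p = u ∧ q = y)) y b) := by
  induction h with
  | @single b hab =>
    by_cases hb : a = u ∧ b = y
    · obtain ⟨rfl, rfl⟩ := hb
      exact Or.inr ⟨.refl, hab, .refl⟩
    · exact Or.inl (.single ⟨hab, hb⟩)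
  | @tail b c _ hbc ih =>
    by_cases hc : b = u ∧ c = y
    · obtain ⟨rfl, rfl⟩ := hc
      rcases ih with ih | ⟨hau, huy, _⟩
      · exact Or.inr ⟨ih.to_reflTransGen, hbc, .refl⟩
      · exact Or.inr ⟨hau, huy, .refl⟩
    · rcases ih with ih | ⟨hau, huy, hyb⟩
      · exact Or.inl (ih.tail ⟨hbc, hc⟩)
      · exact Or.inr ⟨hau, huy, hyb.tail ⟨hbc, hc⟩⟩

theorem transGen_avoid_of_not_rel {w : α} (hw : ∀ b, ¬r w b) {a b : α}
    (h : TransGen r a b) (hb : b ≠ w) : TransGen (fun p q => r p q ∧ p ≠ w ∧ q ≠ w) a b := by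
  have hne : ∀ {p q}, r p q → p ≠ w := fun hpq hp => hw _ (hp ▸ hpq)
  induction h with
  | single hab => exact .single ⟨hab, hne hab, hb⟩
  | tail _ hbc ih => exact (ih (hne hbc)).tail ⟨hbc, hne hbc, hb⟩

theorem not_transGen_map {β : Type*} {f : α → β} {g : β → α}
    (hgf : ∀ a b, r a b → g (f a) = a ∧ g (f b) = b) (hr : ∀ t, ¬TransGen r t t) (t : β) :
    ¬TransGen (Relation.Map r f f) t t := by
  refine fun h => hr _ (h.lift g ?_)
  rintro _ _ ⟨a, b, hab, rfl, rfl⟩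
  rw [Function.onFun, (hgf a b hab).1, (hgf a b hab).2]
  exact hab

section CutVertex

variable {V₁ V₂ : Set α} {v : α}

/-- A walk in `r₁ ∪ r₂` that starts on the `r₂` side can only cross to the `r₁` side
through the cut vertex `v`. -/
theorem reflTransGen_or_of_cutVertex (h₁ : ∀ a b, r₁ a b → a ∈ V₁ ∧ b ∈ V₁)
    (h₂ : ∀ a b, r₂ a b → a ∈ V₂ ∧ b ∈ V₂) (hcut : ∀ z ∈ V₁, z ∈ V₂ → z = v) {a d : α}
    (h : ReflTransGen (fun p q => r₁ p q ∨ r₂ p q) a d) (ha : a ∈ V₂) :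
    (d ∈ V₁ → ReflTransGen r₂ a v ∧ ReflTransGen r₁ v d) ∧
      (d ∈ V₂ → ReflTransGen r₂ a d) := by
  induction h with
  | refl =>
    refine ⟨fun hd => ?_, fun _ => .refl⟩
    obtain rfl := hcut a hd ha
    exact ⟨.refl, .refl⟩
  | @tail c d _ hcd ih =>
    rcases hcd with hcd | hcd
    · obtain ⟨hc, hd⟩ := h₁ _ _ hcd
      obtain ⟨hav, hvc⟩ := ih.1 hc
      refine ⟨fun _ => ⟨hav, hvc.tail hcd⟩, fun hd₂ => ?_⟩
      obtain rfl := hcut d hd hd₂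
      exact hav
    · obtain ⟨hc, hd⟩ := h₂ _ _ hcd
      have had := (ih.2 hc).tail hcd
      refine ⟨fun hd₁ => ?_, fun _ => had⟩
      obtain rfl := hcut d hd₁ hd
      exact ⟨had, .refl⟩

theorem not_transGen_or_of_cutVertex (h₁ : ∀ a b, r₁ a b → a ∈ V₁ ∧ b ∈ V₁)
    (h₂ : ∀ a b, r₂ a b → a ∈ V₂ ∧ b ∈ V₂) (hcut : ∀ z ∈ V₁, z ∈ V₂ → z = v)
    (hr₁ : ∀ t, ¬TransGen r₁ t t) (hr₂ : ∀ t, ¬TransGen r₂ t t) (t : α) :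
    ¬TransGen (fun p q => r₁ p q ∨ r₂ p q) t t := by
  intro h
  obtain ⟨c, htc, hct⟩ := TransGen.head'_iff.mp h
  rcases htc with htc | htc
  · have hct' : ReflTransGen (fun p q => r₂ p q ∨ r₁ p q) c t :=
      ReflTransGen.mono (fun _ _ => Or.symm) _ _ hct
    exact hr₁ t (.head' htc ((reflTransGen_or_of_cutVertex h₂ h₁
      (fun z hz₂ hz₁ => hcut z hz₁ hz₂) hct' (h₁ _ _ htc).2).2 (h₁ _ _ htc).1))
  · exact hr₂ t (.head' htc ((reflTransGen_or_of_cutVertex h₁ h₂ hcut hct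
      (h₂ _ _ htc).2).2 (h₂ _ _ htc).1))

/-- If `r₁` and `r₂` are acyclic and meet only in the cut vertex `v`, every cycle of a
relation contained in `r₁ ∪ r₂ ∪ {(u, y)}` runs `v ⇝ u → y ⇝ v`. -/
theorem cycle_through_of_cutVertex {r : α → α → Prop} {u y : α}
    (h₁ : ∀ a b, r₁ a b → a ∈ V₁ ∧ b ∈ V₁) (h₂ : ∀ a b, r₂ a b → a ∈ V₂ ∧ b ∈ V₂)
    (hcut : ∀ z ∈ V₁, z ∈ V₂ → z = v) (hr₁ : ∀ t, ¬TransGen r₁ t t)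
    (hr₂ : ∀ t, ¬TransGen r₂ t t) (hu : u ∈ V₁) (hy : y ∈ V₂)
    (hr : ∀ a b, r a b → r₁ a b ∨ r₂ a b ∨ (a = u ∧ b = y)) {t : α} (h : TransGen r t t) :
    r u y ∧ ReflTransGen r₂ y v ∧ ReflTransGen r₁ v u := by
  have hsplit : ∀ a b, r a b ∧ ¬(a = u ∧ b = y) → r₁ a b ∨ r₂ a b := fun a b ⟨hab, hne⟩ =>
    (hr a b hab).imp_right (Or.resolve_right · hne)
  rcases transGen_avoid_or_through u y h with h | ⟨htu, huy, hyt⟩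
  · exact absurd (TransGen.mono hsplit _ _ h) (not_transGen_or_of_cutVertex h₁ h₂ hcut hr₁ hr₂ t)
  · have hyu := ReflTransGen.mono hsplit _ _ (hyt.trans htu)
    exact ⟨huy, (reflTransGen_or_of_cutVertex h₁ h₂ hcut hyu hy).1 hu⟩

end CutVertex

end Relation

namespace Digraph'

open Function Relation

theorem ext {D E : Digraph'} (hv : D.verts = E.verts) (ha : ∀ a b, D.Adj a b ↔ E.Adj a b) :
    D = E := by
  cases D; cases E
  simp only [mk.injEq]
  exact ⟨hv, funext₂ fun a b => propext (ha a b)⟩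

def colorClassAdj (D : Digraph') (φ : ℕ → ℕ) (c : ℕ) (a b : ℕ) : Prop :=
  (a ∈ D.verts ∧ φ a = c) ∧ (b ∈ D.verts ∧ φ b = c) ∧ D.Adj a b

theorem colorClassAdj_map {D E : Digraph'} {f φ ψ : ℕ → ℕ}
    (hf : ∀ a b, D.Adj a b → E.Adj (f a) (f b)) (hψ : ∀ w ∈ D.verts, ψ (f w) = φ w) {c a b : ℕ}
    (h : D.colorClassAdj φ c a b) : E.colorClassAdj ψ c (f a) (f b) := by
  obtain ⟨⟨ha, rfl⟩, ⟨hb, hbc⟩, hab⟩ := h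
  have hfab := hf a b hab
  exact ⟨⟨(E.adj_mem hfab).1, hψ a ha⟩, ⟨(E.adj_mem hfab).2, (hψ b hb).trans hbc⟩, hfab⟩

section Colorable

variable {D E H : Digraph'} {j k : ℕ}

theorem Colorable.mono (h : D.Colorable j) (hj : j ≤ k) : D.Colorable k :=
  let ⟨φ, hφ⟩ := h
  ⟨φ, fun v hv => (hφ.1 v hv).trans_le hj, hφ.2⟩

theorem Colorable.comap {f : ℕ → ℕ} (h : E.Colorable j) (hv : ∀ w ∈ D.verts, f w ∈ E.verts)
    (hf : ∀ a b, D.Adj a b → E.Adj (f a) (f b)) : D.Colorable j := by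
  obtain ⟨ψ, hψ⟩ := h
  refine ⟨ψ ∘ f, fun w hw => hψ.1 _ (hv w hw), fun c t ht => hψ.2 c (f t) ?_⟩
  exact ht.lift f fun a b => colorClassAdj_map hf fun _ _ => rfl

theorem Colorable.of_isSubdigraph (h : D.Colorable j) (hH : IsSubdigraph H D) :
    H.Colorable j :=
  h.comap hH.1 hH.2

theorem colorable_card_verts (D : Digraph') : D.Colorable D.verts.card := by
  classical
  refine ⟨fun v => if h : v ∈ D.verts then D.verts.equivFin ⟨v, h⟩ else 0,
    fun v hv => by simp [hv], fun c t ht => ?_⟩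
  obtain ⟨d, ⟨⟨ht, htc⟩, ⟨hd, hdc⟩, htd⟩, -⟩ := TransGen.head'_iff.mp ht
  simp only [ht, hd, dif_pos] at htc hdc
  have : t = d := congrArg Subtype.val (D.verts.equivFin.injective (Fin.ext (htc.trans hdc.symm)))
  exact D.loopless t (this ▸ htd)

theorem colorable_dichrom (D : Digraph') : D.Colorable D.dichrom :=
  Nat.sInf_mem (s := {k | D.Colorable k}) ⟨_, D.colorable_card_verts⟩

theorem dichrom_le (h : D.Colorable j) : D.dichrom ≤ j :=
  Nat.sInf_le h

theorem colorable_iff_dichrom_le : D.Colorable j ↔ D.dichrom ≤ j :=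
  ⟨dichrom_le, D.colorable_dichrom.mono⟩

theorem Colorable.exists_apply_eq (h : D.Colorable j) {x : ℕ} (hx : x ∈ D.verts) {c : ℕ}
    (hc : c < j) : ∃ φ, D.IsAcyclicColoring j φ ∧ φ x = c := by
  obtain ⟨φ, hφ, hacyc⟩ := h
  set σ := Equiv.swap (φ x) c
  have hσ : ∀ i < j, σ i < j := fun i hi => by
    rcases eq_or_ne i (φ x) with rfl | h₁
    · rwa [Equiv.swap_apply_left]
    rcases eq_or_ne i c with rfl | h₂
    · rw [Equiv.swap_apply_right]; exact hφ x hx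
    · rwa [Equiv.swap_apply_of_ne_of_ne h₁ h₂]
  refine ⟨σ ∘ φ, ⟨fun v hv => hσ _ (hφ v hv), fun c' t ht => hacyc (σ c') t ?_⟩,
    Equiv.swap_apply_left _ _⟩
  refine TransGen.mono (fun a b hab => ?_) _ _ ht
  obtain ⟨⟨ha, hac⟩, ⟨hb, hbc⟩, hab⟩ := hab
  exact ⟨⟨ha, by rw [← hac]; exact (Equiv.swap_apply_self _ _ _).symm⟩,
    ⟨hb, by rw [← hbc]; exact (Equiv.swap_apply_self _ _ _).symm⟩, hab⟩

/-- A vertex given a colour of its own cannot lie on a monochromatic cycle, so it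
absorbs the deleted arc. -/
theorem Colorable.of_delArc {a b : ℕ} (h : (D.delArc a b).Colorable j) : D.Colorable (j + 1) := by
  classical
  obtain ⟨φ, hφ, hacyc⟩ := h
  set ψ : ℕ → ℕ := fun w => if w = a then j else φ w
  have hψ : ∀ w ∈ D.verts, w ≠ a → ψ w < j := fun w hw hwa => by simp [ψ, hwa, hφ w hw]
  refine ⟨ψ, fun w hw => ?_, fun c t ht => hacyc c t ?_⟩
  · by_cases hwa : w = a
    · simp [ψ, hwa]
    · exact (hψ w hw hwa).trans (Nat.lt_succ_self j)
  refine TransGen.mono (fun p q hpq => ?_) _ _ ht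
  obtain ⟨⟨hp, hpc⟩, ⟨hq, hqc⟩, hpq⟩ := hpq
  have hqa : q ≠ a := fun hqa => by
    have hpa : p ≠ a := fun hpa => D.loopless q (by rwa [hpa, ← hqa] at hpq)
    have := hψ p hp hpa
    simp only [ψ, hqa, if_true] at hqc
    omega
  have hpa : p ≠ a := fun hpa => by
    have := hψ q hq hqa
    simp only [ψ, hpa, if_true] at hpc
    omega
  simp only [ψ, hpa, hqa, if_false] at hpc hqc
  exact ⟨⟨hp, hpc⟩, ⟨hq, hqc⟩, hpq, fun h => hpa h.1⟩

/-- A sink lies on no cycle, so colouring it `0` extends any colouring of the rest. -/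
theorem Colorable.of_delVert {w : ℕ} (hw : ∀ z, ¬D.Adj w z) (hj : 1 ≤ j)
    (h : (D.delVert w).Colorable j) : D.Colorable j := by
  classical
  obtain ⟨φ, hφ, hacyc⟩ := h
  set ψ : ℕ → ℕ := fun v => if v = w then 0 else φ v
  refine ⟨ψ, fun v hv => ?_, fun c t ht => hacyc c t ?_⟩
  · by_cases hvw : v = w
    · simp only [ψ, hvw, if_true]; omega
    · simpa [ψ, hvw] using hφ v (Finset.mem_erase.mpr ⟨hvw, hv⟩)
  have htw : t ≠ w := by
    obtain ⟨d, ⟨-, -, htd⟩, -⟩ := TransGen.head'_iff.mp ht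
    exact fun htw => hw d (htw ▸ htd)
  refine TransGen.mono (fun p q hpq => ?_) _ _
    (transGen_avoid_of_not_rel (fun z hz => hw z hz.2.2) ht htw)
  obtain ⟨⟨⟨hp, hpc⟩, ⟨hq, hqc⟩, hpq⟩, hpw, hqw⟩ := hpq
  simp only [ψ, hpw, hqw, if_false] at hpc hqc
  exact ⟨⟨Finset.mem_erase.mpr ⟨hpw, hp⟩, hpc⟩, ⟨Finset.mem_erase.mpr ⟨hqw, hq⟩, hqc⟩,
    hpq, hpw, hqw⟩

theorem exists_path_of_not_colorable {u v : ℕ} {φ : ℕ → ℕ} (hD : ¬D.Colorable j)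
    (hφ : (D.delArc u v).IsAcyclicColoring j φ) :
    φ u = φ v ∧ ReflTransGen ((D.delArc u v).colorClassAdj φ (φ v)) v u := by
  obtain ⟨c, t, ht⟩ : ∃ c t, TransGen (D.colorClassAdj φ c) t t := by
    by_contra! hacyc
    exact hD ⟨φ, hφ.1, hacyc⟩
  have hdel : ∀ c a b, D.colorClassAdj φ c a b ∧ ¬(a = u ∧ b = v) →
      (D.delArc u v).colorClassAdj φ c a b :=
    fun _ _ _ ⟨⟨ha, hb, hab⟩, hne⟩ => ⟨ha, hb, hab, hne⟩
  rcases transGen_avoid_or_through u v ht with h | ⟨htu, ⟨⟨-, huc⟩, ⟨-, hvc⟩, -⟩, hvt⟩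
  · exact absurd (TransGen.mono (hdel c) _ _ h) (hφ.2 c t)
  · subst hvc
    exact ⟨huc, ReflTransGen.mono (hdel _) _ _ (hvt.trans htu)⟩

end Colorable

section Critical

variable {D H : Digraph'} {j k : ℕ}

theorem verts_nonempty_of_not_colorable (hD : ¬D.Colorable j) : D.verts.Nonempty :=
  Finset.nonempty_iff_ne_empty.mpr fun h => hD (D.colorable_card_verts.mono (by simp [h]))

theorem exists_isSubdigraph_delArc (hH : IsSubdigraph H D) (hne : H ≠ D)
    (hinc : ∀ w ∈ D.verts, ∃ a b, D.Adj a b ∧ (a = w ∨ b = w)) :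
    ∃ a b, D.Adj a b ∧ IsSubdigraph H (D.delArc a b) := by
  by_cases hv : D.verts ⊆ H.verts
  · obtain ⟨a, b, hab, hnab⟩ : ∃ a b, D.Adj a b ∧ ¬H.Adj a b := by
      by_contra! h
      exact hne (ext (hH.1.antisymm hv) fun a b => ⟨fun h' => hH.2 h', h a b⟩)
    exact ⟨a, b, hab, hH.1, fun p q hpq => ⟨hH.2 hpq, by rintro ⟨rfl, rfl⟩; exact hnab hpq⟩⟩
  · obtain ⟨w, hwD, hwH⟩ := Finset.not_subset.mp hv
    obtain ⟨a, b, hab, hw⟩ := hinc w hwD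
    refine ⟨a, b, hab, hH.1, fun p q hpq => ⟨hH.2 hpq, ?_⟩⟩
    rintro ⟨rfl, rfl⟩
    rcases hw with rfl | rfl
    exacts [hwH (H.adj_mem hpq).1, hwH (H.adj_mem hpq).2]

theorem isCritical_of_forall_delArc (hk : 1 ≤ k) (hD : ¬D.Colorable (k - 1))
    (hinc : ∀ w ∈ D.verts, ∃ a b, D.Adj a b ∧ (a = w ∨ b = w))
    (hdel : ∀ a b, D.Adj a b → (D.delArc a b).Colorable (k - 1)) : D.IsCritical k := by
  obtain ⟨w, hw⟩ := verts_nonempty_of_not_colorable hD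
  obtain ⟨a, b, hab, -⟩ := hinc w hw
  have hcol : D.Colorable k := by
    simpa only [Nat.sub_add_cancel hk] using (hdel a b hab).of_delArc
  have hdichrom : D.dichrom = k := by
    refine le_antisymm (dichrom_le hcol) (not_lt.mp fun h => hD ?_)
    exact colorable_iff_dichrom_le.mpr (by omega)
  refine ⟨hdichrom, fun H hH hne => ?_⟩
  obtain ⟨a, b, hab, hHab⟩ := exists_isSubdigraph_delArc hH hne hinc
  have := dichrom_le ((hdel a b hab).of_isSubdigraph hHab)
  omega

theorem IsCritical.colorable_of_ne (hD : D.IsCritical k) (hH : IsSubdigraph H D) (hne : H ≠ D) :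
    H.Colorable (k - 1) := by
  have := hD.2 H hH hne
  rw [hD.1] at this
  exact colorable_iff_dichrom_le.mpr (by omega)

theorem IsCritical.not_colorable (hD : D.IsCritical k) (hk : 1 ≤ k) : ¬D.Colorable (k - 1) :=
  fun h => by have := dichrom_le h; rw [hD.1] at this; omega

theorem IsCritical.colorable_delArc (hD : D.IsCritical k) {a b : ℕ} (hab : D.Adj a b) :
    (D.delArc a b).Colorable (k - 1) := by
  refine hD.colorable_of_ne ⟨subset_rfl, fun _ _ h => h.1⟩ fun h => ?_
  rw [← h] at hab
  exact hab.2 ⟨rfl, rfl⟩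

theorem IsCritical.exists_adj (hD : D.IsCritical k) (hk : 2 ≤ k) {w : ℕ} (hw : w ∈ D.verts) :
    ∃ z, D.Adj w z := by
  by_contra! hsink
  refine hD.not_colorable (by omega) (Colorable.of_delVert hsink (by omega) ?_)
  refine hD.colorable_of_ne ⟨Finset.erase_subset _ _, fun _ _ h => h.1⟩ fun h => ?_
  rw [← h] at hw
  exact Finset.notMem_erase w _ hw

theorem IsCritical.exists_arc (hD : D.IsCritical k) (hk : 2 ≤ k) : ∃ u v, D.Adj u v :=
  let ⟨w, hw⟩ := verts_nonempty_of_not_colorable (hD.not_colorable (by omega))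
  let ⟨z, hz⟩ := hD.exists_adj hk hw
  ⟨w, z, hz⟩

end Critical

theorem numArcs_eq_ncard (D : Digraph') : D.numArcs = {a : ℕ × ℕ | D.Adj a.1 a.2}.ncard := rfl

theorem finite_arcs (D : Digraph') : {a : ℕ × ℕ | D.Adj a.1 a.2}.Finite :=
  ((D.verts ×ˢ D.verts : Finset (ℕ × ℕ)).finite_toSet).subset fun _ ha =>
    Finset.mem_product.mpr (D.adj_mem ha)

def shift (D : Digraph') (t : ℕ) : Digraph' where
  verts := D.verts.image (· + t)
  Adj := Relation.Map D.Adj (· + t) (· + t)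
  adj_mem := by
    rintro _ _ ⟨p, q, hpq, rfl, rfl⟩
    exact ⟨Finset.mem_image_of_mem _ (D.adj_mem hpq).1, Finset.mem_image_of_mem _ (D.adj_mem hpq).2⟩
  loopless := by
    rintro v ⟨p, q, hpq, rfl, hq⟩
    obtain rfl : p = q := by simp only at hq; omega
    exact D.loopless p hpq

def unshift (H : Digraph') (t : ℕ) : Digraph' where
  verts := H.verts.image (· - t)
  Adj a b := H.Adj (a + t) (b + t)
  adj_mem := fun a b h => by
    refine ⟨Finset.mem_image.mpr ⟨a + t, (H.adj_mem h).1, ?_⟩,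
      Finset.mem_image.mpr ⟨b + t, (H.adj_mem h).2, ?_⟩⟩ <;> simp
  loopless := fun v h => H.loopless _ h

section Shift

variable {D H : Digraph'} {t j k : ℕ}

theorem order_shift (D : Digraph') (t : ℕ) : (D.shift t).order = D.order :=
  Finset.card_image_of_injective _ (add_left_injective t)

theorem numArcs_shift (D : Digraph') (t : ℕ) : (D.shift t).numArcs = D.numArcs := by
  have : {a : ℕ × ℕ | (D.shift t).Adj a.1 a.2} =
      (Prod.map (· + t) (· + t)) '' {a : ℕ × ℕ | D.Adj a.1 a.2} := by
    ext ⟨a, b⟩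
    simp [shift, Relation.Map]
  rw [numArcs_eq_ncard, numArcs_eq_ncard, this,
    Set.ncard_image_of_injective _ ((add_left_injective t).prodMap (add_left_injective t))]

theorem colorable_shift_iff : (D.shift t).Colorable j ↔ D.Colorable j := by
  constructor
  · exact fun h => h.comap (fun w => Finset.mem_image_of_mem _) fun p q hpq => ⟨p, q, hpq, rfl, rfl⟩
  · refine fun h => h.comap (f := (· - t)) ?_ ?_
    · intro w hw
      obtain ⟨p, hp, rfl⟩ := Finset.mem_image.mp hw
      simpa using hp
    · rintro _ _ ⟨p, q, hpq, rfl, rfl⟩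
      simpa using hpq

theorem dichrom_shift (D : Digraph') (t : ℕ) : (D.shift t).dichrom = D.dichrom :=
  congrArg sInf (Set.ext fun _ => colorable_shift_iff)

theorem shift_unshift (hH : IsSubdigraph H (D.shift t)) : (H.unshift t).shift t = H := by
  have hle : ∀ w ∈ H.verts, t ≤ w := fun w hw => by
    obtain ⟨p, -, rfl⟩ := Finset.mem_image.mp (hH.1 hw)
    omega
  refine ext ?_ fun a b => ⟨?_, fun h => ?_⟩
  · ext w
    simp only [shift, unshift, Finset.mem_image]
    constructor
    · rintro ⟨_, ⟨w', hw', rfl⟩, rfl⟩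
      rwa [Nat.sub_add_cancel (hle _ hw')]
    · exact fun hw => ⟨w - t, ⟨w, hw, rfl⟩, Nat.sub_add_cancel (hle _ hw)⟩
  · rintro ⟨p, q, hpq, rfl, rfl⟩
    exact hpq
  · have ha := hle _ (H.adj_mem h).1
    have hb := hle _ (H.adj_mem h).2
    refine ⟨a - t, b - t, ?_, Nat.sub_add_cancel ha, Nat.sub_add_cancel hb⟩
    show H.Adj (a - t + t) (b - t + t)
    rwa [Nat.sub_add_cancel ha, Nat.sub_add_cancel hb]

theorem isSubdigraph_unshift (hH : IsSubdigraph H (D.shift t)) : IsSubdigraph (H.unshift t) D := by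
  refine ⟨fun w hw => ?_, fun a b h => ?_⟩
  · obtain ⟨_, ha, rfl⟩ := Finset.mem_image.mp hw
    obtain ⟨p, hp, rfl⟩ := Finset.mem_image.mp (hH.1 ha)
    simpa using hp
  · obtain ⟨p, q, hpq, hp, hq⟩ := hH.2 h
    simp only at hp hq
    obtain ⟨rfl, rfl⟩ : p = a ∧ q = b := ⟨by omega, by omega⟩
    exact hpq

theorem IsCritical.shift (hD : D.IsCritical k) (t : ℕ) : (D.shift t).IsCritical k := by
  refine ⟨(dichrom_shift D t).trans hD.1, fun H hH hne => ?_⟩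
  rw [dichrom_shift, ← shift_unshift hH, dichrom_shift]
  exact hD.2 _ (isSubdigraph_unshift hH) fun h => hne (by rw [← shift_unshift hH, h])

theorem exists_disjoint_shift (D E : Digraph') : ∃ t, Disjoint D.verts (E.shift t).verts := by
  refine ⟨D.verts.sup id + 1, Finset.disjoint_left.mpr fun w hw hwE => ?_⟩
  obtain ⟨p, -, rfl⟩ := Finset.mem_image.mp hwE
  have : p + (D.verts.sup id + 1) ≤ D.verts.sup id := Finset.le_sup (f := id) hw
  omega

end Shift

/-- The Hajós join of `D₁` and `D₂` along the arcs `uv` and `xy`: delete both arcs, identify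
`x` with `v` and add the arc `uy`. -/
def hajos (D₁ D₂ : Digraph') (u v x y : ℕ) : Digraph' where
  verts := D₁.verts ∪ D₂.verts.erase x
  -- The first three conjuncts are implied by the last one once `D₁` and `D₂` are disjoint
  -- and `uv`, `xy` are arcs; they make `hajos` a digraph unconditionally.
  Adj a b := a ≠ b ∧ a ∈ D₁.verts ∪ D₂.verts.erase x ∧ b ∈ D₁.verts ∪ D₂.verts.erase x ∧
    ((D₁.delArc u v).Adj a b ∨
      Relation.Map (D₂.delArc x y).Adj (update id x v) (update id x v) a b ∨ (a = u ∧ b = y))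
  adj_mem := fun _ _ h => ⟨h.2.1, h.2.2.1⟩
  loopless := fun _ h => h.1 rfl

section Hajos

variable {D₁ D₂ : Digraph'} {u v x y j k : ℕ}

theorem update_mem_hajos (huv : D₁.Adj u v) {p : ℕ} (hp : p ∈ D₂.verts) :
    update id x v p ∈ (hajos D₁ D₂ u v x y).verts := by
  by_cases hpx : p = x
  · rw [hpx, update_self]
    exact Finset.mem_union_left _ (D₁.adj_mem huv).2
  · rw [update_of_ne hpx]
    exact Finset.mem_union_right _ (Finset.mem_erase.mpr ⟨hpx, hp⟩)

theorem update_update_of_mem (hv : v ∉ D₂.verts) {p : ℕ} (hp : p ∈ D₂.verts) :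
    update id v x (update id x v p) = p := by
  by_cases hpx : p = x
  · rw [hpx, update_self, update_self]
  · rw [update_of_ne hpx, id, update_of_ne (ne_of_mem_of_not_mem hp hv), id]

theorem injOn_update (hv : v ∉ D₂.verts) : Set.InjOn (update id x v) D₂.verts :=
  fun p hp q hq h => by rw [← update_update_of_mem hv hp, h, update_update_of_mem hv hq]

theorem eq_of_update_mem (hdisj : Disjoint D₁.verts D₂.verts) {p : ℕ} (hp : p ∈ D₂.verts)
    (h : update id x v p ∈ D₁.verts) : p = x := by
  by_contra hpx
  rw [update_of_ne hpx] at h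
  exact Finset.disjoint_left.mp hdisj h hp

theorem hajos_adj_of_left {a b : ℕ}
    (hab : (D₁.delArc u v).Adj a b) : (hajos D₁ D₂ u v x y).Adj a b :=
  ⟨fun h => D₁.loopless a (h ▸ hab.1), Finset.mem_union_left _ (D₁.adj_mem hab.1).1,
    Finset.mem_union_left _ (D₁.adj_mem hab.1).2, Or.inl hab⟩

theorem hajos_adj_of_right (hdisj : Disjoint D₁.verts D₂.verts) (huv : D₁.Adj u v) {p q : ℕ}
    (hpq : (D₂.delArc x y).Adj p q) :
    (hajos D₁ D₂ u v x y).Adj (update id x v p) (update id x v q) := by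
  have hv : v ∉ D₂.verts := Finset.disjoint_left.mp hdisj (D₁.adj_mem huv).2
  obtain ⟨hp, hq⟩ := D₂.adj_mem hpq.1
  refine ⟨fun h => D₂.loopless p ?_, update_mem_hajos (y := y) huv hp,
    update_mem_hajos (y := y) huv hq, Or.inr (Or.inl ⟨p, q, hpq, rfl, rfl⟩)⟩
  rw [injOn_update hv hp hq h] at hpq ⊢
  exact hpq.1

theorem hajos_adj_new (hdisj : Disjoint D₁.verts D₂.verts) (huv : D₁.Adj u v)
    (hxy : D₂.Adj x y) : (hajos D₁ D₂ u v x y).Adj u y := by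
  have hu := (D₁.adj_mem huv).1
  have hy := (D₂.adj_mem hxy).2
  exact ⟨ne_of_mem_of_not_mem hu (Finset.disjoint_right.mp hdisj hy), Finset.mem_union_left _ hu,
    Finset.mem_union_right _ (Finset.mem_erase.mpr ⟨fun h => D₂.loopless x (h ▸ hxy), hy⟩),
    Or.inr (Or.inr ⟨rfl, rfl⟩)⟩

theorem order_hajos (hdisj : Disjoint D₁.verts D₂.verts) (hx : x ∈ D₂.verts) :
    (hajos D₁ D₂ u v x y).order = D₁.order + D₂.order - 1 := by
  have h₂ : 0 < D₂.order := Finset.card_pos.mpr ⟨x, hx⟩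
  rw [order, hajos, Finset.card_union_of_disjoint
    (Finset.disjoint_of_subset_right (Finset.erase_subset _ _) hdisj),
    Finset.card_erase_of_mem hx]
  unfold order at h₂ ⊢
  omega

theorem arcs_hajos (hdisj : Disjoint D₁.verts D₂.verts) (huv : D₁.Adj u v) (hxy : D₂.Adj x y) :
    {a : ℕ × ℕ | (hajos D₁ D₂ u v x y).Adj a.1 a.2} =
      ({a : ℕ × ℕ | D₁.Adj a.1 a.2} \ {(u, v)}) ∪
        Prod.map (update id x v) (update id x v) '' ({a : ℕ × ℕ | D₂.Adj a.1 a.2} \ {(x, y)}) ∪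
        {(u, y)} := by
  ext ⟨a, b⟩
  constructor
  · rintro ⟨-, -, -, h | ⟨p, q, hpq, rfl, rfl⟩ | ⟨rfl, rfl⟩⟩
    · exact Or.inl (Or.inl ⟨h.1, fun h' => h.2 (Prod.mk.inj h')⟩)
    · exact Or.inl (Or.inr ⟨(p, q), ⟨hpq.1, fun h' => hpq.2 (Prod.mk.inj h')⟩, rfl⟩)
    · exact Or.inr rfl
  · rintro ((⟨h, hne⟩ | ⟨⟨p, q⟩, ⟨hpq, hne⟩, h⟩) | h)
    · exact hajos_adj_of_left ⟨h, fun h' => hne (Prod.ext h'.1 h'.2)⟩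
    · obtain ⟨rfl, rfl⟩ := Prod.mk.inj h
      exact hajos_adj_of_right hdisj huv ⟨hpq, fun h' => hne (Prod.ext h'.1 h'.2)⟩
    · obtain ⟨rfl, rfl⟩ := Prod.mk.inj h
      exact hajos_adj_new hdisj huv hxy

theorem numArcs_hajos (hdisj : Disjoint D₁.verts D₂.verts) (huv : D₁.Adj u v)
    (hxy : D₂.Adj x y) :
    (hajos D₁ D₂ u v x y).numArcs = D₁.numArcs + D₂.numArcs - 1 := by
  have hv : v ∉ D₂.verts := Finset.disjoint_left.mp hdisj (D₁.adj_mem huv).2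
  set A₁ := {a : ℕ × ℕ | D₁.Adj a.1 a.2} \ {(u, v)}
  set A₂ := Prod.map (update id x v) (update id x v) '' ({a : ℕ × ℕ | D₂.Adj a.1 a.2} \ {(x, y)})
  have hinj : Set.InjOn (Prod.map (update id x v) (update id x v))
      ({a : ℕ × ℕ | D₂.Adj a.1 a.2} \ {(x, y)}) :=
    ((injOn_update hv).prodMap (injOn_update hv)).mono fun _ ha => D₂.adj_mem ha.1
  have h₁₂ : Disjoint A₁ A₂ := by
    refine Set.disjoint_left.mpr ?_
    rintro _ ⟨hab, -⟩ ⟨⟨p, q⟩, ⟨hpq, -⟩, rfl⟩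
    have hp := eq_of_update_mem hdisj (D₂.adj_mem hpq).1 (D₁.adj_mem hab).1
    have hq := eq_of_update_mem hdisj (D₂.adj_mem hpq).2 (D₁.adj_mem hab).2
    simp only at hp hq hpq
    rw [hp, hq] at hpq
    exact D₂.loopless x hpq
  have hnew : (u, y) ∉ A₁ ∪ A₂ := by
    rintro (⟨h, -⟩ | ⟨⟨p, q⟩, ⟨hpq, -⟩, h⟩)
    · exact Finset.disjoint_left.mp hdisj (D₁.adj_mem h).2 (D₂.adj_mem hxy).2
    · simp only [Prod.map_apply, Prod.mk.injEq] at h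
      have hp := eq_of_update_mem hdisj (D₂.adj_mem hpq).1 (h.1 ▸ (D₁.adj_mem huv).1)
      simp only at hp
      rw [hp, update_self] at h
      exact D₁.loopless u (h.1 ▸ huv)
  have hA₁ := D₁.finite_arcs.sdiff (t := {(u, v)})
  have hA₂ := (D₂.finite_arcs.sdiff (t := {(x, y)})).image
    (Prod.map (update id x v) (update id x v))
  have hpos₁ : 0 < D₁.numArcs := (Set.ncard_pos D₁.finite_arcs).mpr ⟨(u, v), huv⟩
  have hpos₂ : 0 < D₂.numArcs := (Set.ncard_pos D₂.finite_arcs).mpr ⟨(x, y), hxy⟩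
  have hcard₁ : A₁.ncard = D₁.numArcs - 1 := Set.ncard_sdiff_singleton_of_mem huv
  have hcard₂ : A₂.ncard = D₂.numArcs - 1 := by
    rw [hinj.ncard_image]
    exact Set.ncard_sdiff_singleton_of_mem hxy
  rw [numArcs_eq_ncard, arcs_hajos hdisj huv hxy,
    Set.ncard_union_eq (Set.disjoint_singleton_right.mpr hnew) (hA₁.union hA₂),
    Set.ncard_union_eq h₁₂ hA₁ hA₂, hcard₁, hcard₂, Set.ncard_singleton]
  omega

theorem exists_coloring_hajos (hdisj : Disjoint D₁.verts D₂.verts) (huv : D₁.Adj u v)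
    {φ₁ φ₂ : ℕ → ℕ} (hφ₁ : ∀ w ∈ D₁.verts, φ₁ w < j) (hφ₂ : ∀ p ∈ D₂.verts, φ₂ p < j)
    (hvx : φ₂ x = φ₁ v) :
    ∃ ψ : ℕ → ℕ, (∀ w ∈ (hajos D₁ D₂ u v x y).verts, ψ w < j) ∧
      (∀ w ∈ D₁.verts, φ₁ w = ψ w) ∧ ∀ p ∈ D₂.verts, ψ (update id x v p) = φ₂ p := by
  classical
  refine ⟨fun w => if w ∈ D₁.verts then φ₁ w else φ₂ w, fun w hw => ?_,
    fun w hw => by simp [hw], fun p hp => ?_⟩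
  · rcases Finset.mem_union.mp hw with hw | hw
    · simpa [hw] using hφ₁ w hw
    · have hw₁ := Finset.disjoint_right.mp hdisj (Finset.mem_erase.mp hw).2
      simpa [hw₁] using hφ₂ w (Finset.mem_erase.mp hw).2
  · by_cases hpx : p = x
    · simp [hpx, (D₁.adj_mem huv).2, hvx]
    · simp [update_of_ne hpx, Finset.disjoint_right.mp hdisj hp]

theorem colorClassAdj_delArc_hajos {E₁ E₂ : Digraph'} {a b c : ℕ} {ψ φ₂ : ℕ → ℕ}
    (harc₁ : ∀ p q, (D₁.delArc u v).Adj p q → ¬(p = a ∧ q = b) → E₁.Adj p q)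
    (harc₂ : ∀ p q, (D₂.delArc x y).Adj p q →
      ¬(update id x v p = a ∧ update id x v q = b) → E₂.Adj p q)
    (hψ₂ : ∀ p ∈ E₂.verts, ψ (update id x v p) = φ₂ p) {p q : ℕ}
    (h : ((hajos D₁ D₂ u v x y).delArc a b).colorClassAdj ψ c p q) :
    E₁.colorClassAdj ψ c p q ∨
      Relation.Map (E₂.colorClassAdj φ₂ c) (update id x v) (update id x v) p q ∨
      (p = u ∧ q = y) := by
  obtain ⟨⟨-, hpc⟩, ⟨-, hqc⟩, hpq, hne⟩ := h
  rcases hpq.2.2.2 with hpq | ⟨p', q', hpq', rfl, rfl⟩ | hpq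
  · have hE := harc₁ p q hpq hne
    exact Or.inl ⟨⟨(E₁.adj_mem hE).1, hpc⟩, ⟨(E₁.adj_mem hE).2, hqc⟩, hE⟩
  · have hE := harc₂ p' q' hpq' hne
    obtain ⟨hp, hq⟩ := E₂.adj_mem hE
    exact Or.inr (Or.inl ⟨p', q', ⟨⟨hp, hψ₂ p' hp ▸ hpc⟩, ⟨hq, hψ₂ q' hq ▸ hqc⟩, hE⟩, rfl, rfl⟩)
  · exact Or.inr (Or.inr hpq)

/-- Colourings of spanning subdigraphs `E₁ ⊆ D₁` and `E₂ ⊆ D₂`, permuted to agree at `v ~ x`,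
glue to a colouring of the Hajós join minus `ab`: a monochromatic cycle would have to run
`v ⇝ u → y ⇝ v` (`v` is a cut vertex of the join minus `uy`), and is closed inside `E₁` by `uv`
or inside `E₂` by `xy`, unless it is `uy` that was deleted. -/
theorem colorable_delArc_hajos_of (hdisj : Disjoint D₁.verts D₂.verts) (huv : D₁.Adj u v)
    (hxy : D₂.Adj x y) {E₁ E₂ : Digraph'} {a b : ℕ} (hE₁ : E₁.Colorable j)
    (hE₂ : E₂.Colorable j) (hE₁v : E₁.verts = D₁.verts) (hE₂v : E₂.verts = D₂.verts)
    (harc₁ : ∀ p q, (D₁.delArc u v).Adj p q → ¬(p = a ∧ q = b) → E₁.Adj p q)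
    (harc₂ : ∀ p q, (D₂.delArc x y).Adj p q →
      ¬(update id x v p = a ∧ update id x v q = b) → E₂.Adj p q)
    (hclose : (u = a ∧ y = b) ∨ E₁.Adj u v ∨ E₂.Adj x y) :
    ((hajos D₁ D₂ u v x y).delArc a b).Colorable j := by
  obtain ⟨hu, hv₁⟩ := D₁.adj_mem huv
  obtain ⟨hx, hy⟩ := D₂.adj_mem hxy
  have hv₂ : v ∉ D₂.verts := Finset.disjoint_left.mp hdisj hv₁
  have hyx : y ≠ x := fun h => D₂.loopless x (h ▸ hxy)
  obtain ⟨φ₁, hφ₁⟩ := hE₁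
  obtain ⟨φ₂, hφ₂, hvx⟩ := hE₂.exists_apply_eq (hE₂v ▸ hx) (hφ₁.1 v (hE₁v ▸ hv₁))
  obtain ⟨ψ, hψ, hψ₁, hψ₂⟩ := exists_coloring_hajos (y := y) hdisj huv (hE₁v ▸ hφ₁.1)
    (hE₂v ▸ hφ₂.1) hvx
  refine ⟨ψ, hψ, fun c t ht => ?_⟩
  set r₂ := Relation.Map (E₂.colorClassAdj φ₂ c) (update id x v) (update id x v)
  have hr₁ : ∀ t, ¬TransGen (E₁.colorClassAdj ψ c) t t := fun t h =>
    hφ₁.2 c t (h.lift id fun _ _ => colorClassAdj_map (fun _ _ => id) (hE₁v ▸ hψ₁))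
  have hr₂ : ∀ t, ¬TransGen r₂ t t := not_transGen_map (g := update id v x)
    (fun p q hpq => ⟨update_update_of_mem hv₂ (hE₂v ▸ (E₂.adj_mem hpq.2.2).1),
      update_update_of_mem hv₂ (hE₂v ▸ (E₂.adj_mem hpq.2.2).2)⟩) (hφ₂.2 c)
  obtain ⟨⟨⟨-, huc⟩, ⟨-, hyc⟩, -, hne⟩, hyv, hvu⟩ :=
    cycle_through_of_cutVertex (V₁ := D₁.verts) (V₂ := update id x v '' D₂.verts) (v := v)
      (u := u) (y := y) (fun p q hpq => hE₁v ▸ E₁.adj_mem hpq.2.2)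
      (by
        rintro _ _ ⟨p, q, hpq, rfl, rfl⟩
        obtain ⟨hp, hq⟩ := E₂.adj_mem hpq.2.2
        exact ⟨⟨p, hE₂v ▸ hp, rfl⟩, ⟨q, hE₂v ▸ hq, rfl⟩⟩)
      (by
        rintro _ hz ⟨p, hp, rfl⟩
        rw [eq_of_update_mem hdisj hp hz, update_self])
      hr₁ hr₂ hu ⟨y, hy, by rw [update_of_ne hyx, id]⟩
      (fun p q => colorClassAdj_delArc_hajos harc₁ harc₂ (hE₂v ▸ hψ₂)) ht
  have hvc : ψ v = c := by
    rcases hyv.cases_tail with hvy | ⟨_, -, p, q, ⟨-, ⟨hq, hqc⟩, -⟩, -, hqv⟩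
    · exact absurd (hvy ▸ hy) hv₂
    · rw [← hqv, hψ₂ q (hE₂v ▸ hq), hqc]
  rcases hclose with h | h | h
  · exact hne h
  · exact hr₁ v (.tail' hvu ⟨⟨hE₁v ▸ hu, huc⟩, ⟨hE₁v ▸ hv₁, hvc⟩, h⟩)
  · have hxc : φ₂ x = c := by rw [← hψ₂ x hx, update_self, hvc]
    have hyc' : φ₂ y = c := by rw [← hψ₂ y hy, update_of_ne hyx, id, hyc]
    exact hr₂ y (.tail' hyv ⟨x, y, ⟨⟨hE₂v ▸ hx, hxc⟩, ⟨hE₂v ▸ hy, hyc'⟩, h⟩, update_self _ _ _,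
      update_of_ne hyx _ _⟩)

theorem colorable_delArc_hajos (hdisj : Disjoint D₁.verts D₂.verts) (hD₁ : D₁.IsCritical k)
    (hD₂ : D₂.IsCritical k) (huv : D₁.Adj u v) (hxy : D₂.Adj x y) {a b : ℕ}
    (hab : (hajos D₁ D₂ u v x y).Adj a b) :
    ((hajos D₁ D₂ u v x y).delArc a b).Colorable (k - 1) := by
  rcases hab.2.2.2 with hab | ⟨p, q, hpq, rfl, rfl⟩ | ⟨rfl, rfl⟩
  · refine colorable_delArc_hajos_of hdisj huv hxy (hD₁.colorable_delArc hab.1)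
      (hD₂.colorable_delArc hxy) rfl rfl (fun _ _ h hne => ⟨h.1, hne⟩) (fun _ _ h _ => h)
      (Or.inr (Or.inl ⟨huv, fun h => hab.2 ⟨h.1.symm, h.2.symm⟩⟩))
  · refine colorable_delArc_hajos_of hdisj huv hxy (hD₁.colorable_delArc huv)
      (hD₂.colorable_delArc hpq.1) rfl rfl (fun _ _ h _ => h)
      (fun _ _ h hne => ⟨h.1, fun h' => hne ⟨h'.1 ▸ rfl, h'.2 ▸ rfl⟩⟩)
      (Or.inr (Or.inr ⟨hxy, fun h => hpq.2 ⟨h.1.symm, h.2.symm⟩⟩))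
  · exact colorable_delArc_hajos_of hdisj huv hxy (hD₁.colorable_delArc huv)
      (hD₂.colorable_delArc hxy) rfl rfl (fun _ _ h _ => h) (fun _ _ h _ => h)
      (Or.inl ⟨rfl, rfl⟩)

theorem colorClassAdj_hajos_of_left {φ : ℕ → ℕ} {c a b : ℕ}
    (h : (D₁.delArc u v).colorClassAdj φ c a b) : (hajos D₁ D₂ u v x y).colorClassAdj φ c a b :=
  colorClassAdj_map (f := id) (fun _ _ => hajos_adj_of_left) (fun _ _ => rfl) h

theorem colorClassAdj_hajos_of_right (hdisj : Disjoint D₁.verts D₂.verts) (huv : D₁.Adj u v)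
    {φ : ℕ → ℕ} {c p q : ℕ} (h : (D₂.delArc x y).colorClassAdj (φ ∘ update id x v) c p q) :
    (hajos D₁ D₂ u v x y).colorClassAdj φ c (update id x v p) (update id x v q) :=
  colorClassAdj_map (fun _ _ => hajos_adj_of_right hdisj huv) (fun _ _ => rfl) h

/-- A `j`-colouring of the join restricts to acyclic colourings of `D₁ - uv` and `D₂ - xy`;
neither extends to the deleted arc, so there are monochromatic paths `v ⇝ u` and `y ⇝ v` of the
same colour, which `uy` closes into a cycle. -/
theorem not_colorable_hajos (hdisj : Disjoint D₁.verts D₂.verts) (huv : D₁.Adj u v)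
    (hxy : D₂.Adj x y) (hD₁ : ¬D₁.Colorable j) (hD₂ : ¬D₂.Colorable j) :
    ¬(hajos D₁ D₂ u v x y).Colorable j := by
  rintro ⟨φ, hφ, hacyc⟩
  have hyx : y ≠ x := fun h => D₂.loopless x (h ▸ hxy)
  have hφ₁ : (D₁.delArc u v).IsAcyclicColoring j φ :=
    ⟨fun w hw => hφ w (Finset.mem_union_left _ hw), fun c t ht =>
      hacyc c t (ht.lift id fun _ _ => colorClassAdj_hajos_of_left)⟩
  have hφ₂ : (D₂.delArc x y).IsAcyclicColoring j (φ ∘ update id x v) :=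
    ⟨fun w hw => hφ _ (update_mem_hajos huv hw), fun c t ht =>
      hacyc c _ (ht.lift (update id x v) fun _ _ => colorClassAdj_hajos_of_right hdisj huv)⟩
  obtain ⟨hu, hvu⟩ := exists_path_of_not_colorable hD₁ hφ₁
  obtain ⟨hvy, hyx'⟩ := exists_path_of_not_colorable hD₂ hφ₂
  have hvu' := hvu.lift id fun _ _ => colorClassAdj_hajos_of_left (D₂ := D₂) (x := x) (y := y)
  have hyv' := hyx'.lift (update id x v) fun _ _ => colorClassAdj_hajos_of_right hdisj huv
  simp only [comp_apply, Function.onFun, id, update_self, update_of_ne hyx] at hvy hvu' hyv'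
  refine hacyc (φ v) v (.trans_left (.tail' hvu' ⟨⟨?_, hu⟩, ⟨?_, hvy.symm⟩,
    hajos_adj_new hdisj huv hxy⟩) (hvy ▸ hyv'))
  · exact Finset.mem_union_left _ (D₁.adj_mem huv).1
  · exact Finset.mem_union_right _ (Finset.mem_erase.mpr ⟨hyx, (D₂.adj_mem hxy).2⟩)

theorem exists_adj_hajos_of_mem (hdisj : Disjoint D₁.verts D₂.verts) (huv : D₁.Adj u v)
    (hxy : D₂.Adj x y) (hout₁ : ∀ w ∈ D₁.verts, ∃ z, D₁.Adj w z)
    (hout₂ : ∀ w ∈ D₂.verts, ∃ z, D₂.Adj w z) {w : ℕ} (hw : w ∈ (hajos D₁ D₂ u v x y).verts) :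
    ∃ a b, (hajos D₁ D₂ u v x y).Adj a b ∧ (a = w ∨ b = w) := by
  rcases Finset.mem_union.mp hw with hw | hw
  · by_cases hwu : w = u
    · exact ⟨u, y, hajos_adj_new hdisj huv hxy, Or.inl hwu.symm⟩
    · obtain ⟨z, hz⟩ := hout₁ w hw
      exact ⟨w, z, hajos_adj_of_left ⟨hz, fun h => hwu h.1⟩, Or.inl rfl⟩
  · obtain ⟨hwx, hw⟩ := Finset.mem_erase.mp hw
    obtain ⟨z, hz⟩ := hout₂ w hw
    exact ⟨_, _, hajos_adj_of_right hdisj huv ⟨hz, fun h => hwx h.1⟩,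
      Or.inl (update_of_ne hwx _ _)⟩

theorem IsCritical.hajos (hdisj : Disjoint D₁.verts D₂.verts) (hD₁ : D₁.IsCritical k)
    (hD₂ : D₂.IsCritical k) (hk : 2 ≤ k) (huv : D₁.Adj u v) (hxy : D₂.Adj x y) :
    (hajos D₁ D₂ u v x y).IsCritical k :=
  isCritical_of_forall_delArc (by omega)
    (not_colorable_hajos hdisj huv hxy (hD₁.not_colorable (by omega))
      (hD₂.not_colorable (by omega)))
    (fun _ => exists_adj_hajos_of_mem hdisj huv hxy (fun _ => hD₁.exists_adj hk)
      (fun _ => hD₂.exists_adj hk))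
    (fun _ _ => colorable_delArc_hajos hdisj hD₁ hD₂ huv hxy)

end Hajos

end Digraph'

theorem exists_isCritical_numArcs_eq_extArcs {k n : ℕ}
    (h : ∃ D : Digraph', D.IsCritical k ∧ D.order = n) :
    ∃ D : Digraph', D.IsCritical k ∧ D.order = n ∧ D.numArcs = extArcs k n := by
  obtain ⟨D, hD, hn⟩ := h
  exact Nat.sInf_mem (s := {m | ∃ D : Digraph', D.IsCritical k ∧ D.order = n ∧ D.numArcs = m})
    ⟨D.numArcs, D, hD, hn, rfl⟩

theorem stmt11_general (k n m : ℕ) (hk : 3 ≤ k)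
    (hex1 : ∃ D : Digraph', D.IsCritical k ∧ D.order = n)
    (hex2 : ∃ D : Digraph', D.IsCritical k ∧ D.order = m) :
    extArcs k (n + m - 1) ≤ extArcs k n + extArcs k m - 1 := by
  obtain ⟨D₁, hD₁, rfl, harcs₁⟩ := exists_isCritical_numArcs_eq_extArcs hex1
  obtain ⟨D₂, hD₂, rfl, harcs₂⟩ := exists_isCritical_numArcs_eq_extArcs hex2
  obtain ⟨t, hdisj⟩ := exists_disjoint_shift D₁ D₂
  obtain ⟨u, v, huv⟩ := hD₁.exists_arc (by omega)
  obtain ⟨x, y, hxy⟩ := (hD₂.shift t).exists_arc (by omega)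
  refine Nat.sInf_le ⟨hajos D₁ (D₂.shift t) u v x y,
    hD₁.hajos hdisj (hD₂.shift t) (by omega) huv hxy, ?_, ?_⟩
  · rw [order_hajos hdisj ((D₂.shift t).adj_mem hxy).1, order_shift]
  · rw [numArcs_hajos hdisj huv hxy, numArcs_shift, harcs₁, harcs₂]

/-- Subadditivity of the extremal function from the Hajós construction:
for `n ≥ k ≥ 3` and `m ≥ k` (assuming `k`-critical digraphs of orders `n` and `m`
exist), `ext⃗(k, n+m-1) ≤ ext⃗(k, n) + ext⃗(k, m) - 1`. -/
theorem stmt11 (k n m : ℕ) (hk : 3 ≤ k) (hn : k ≤ n) (hm : k ≤ m)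
    (hex1 : ∃ D : Digraph', D.IsCritical k ∧ D.order = n)
    (hex2 : ∃ D : Digraph', D.IsCritical k ∧ D.order = m) :
    extArcs k (n + m - 1) ≤ extArcs k n + extArcs k m - 1 :=
  stmt11_general k n m hk hex1 hex2
end
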